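/- arXiv:2512.05324 — 10 statements merged into one kernel-verified Lean document; each statement's English description precedes it below -/
import Mathlib

section
/- Let X, Y ⊂ R^n be nonempty closed convex sets, let y ∈ Y, let α ∈ (0,1), and set z := αy + (1−α)P_X(y). Then ⟨z − P_X(z), z − P_Y(z)⟩ ≤ 0, i.e., z is centralized relative to (X,Y). -/
open Metric Filter Topology
open scoped RealInnerProductSpace

/-!
Write `p = P_X y`. Moving `y` towards `p` does not change its projection onto `X`, so
`z - P_X z = α (y - p)`. Testing the projection inequality of `P_Y z` at `y ∈ Y`, and using
`y - P_Y z = (z - P_Y z) + (1 - α)(y - p)`, gives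
`‖z - P_Y z‖² + (1 - α) ⟪y - p, z - P_Y z⟫ ≤ 0`, whence `⟪y - p, z - P_Y z⟫ ≤ 0`.
-/

variable {E : Type*} [NormedAddCommGroup E] [InnerProductSpace ℝ E]

/-- The obtuse-angle criterion; for closed convex `X` it characterizes `p` as the nearest point
of `X` to `u` (`norm_eq_iInf_iff_real_inner_le_zero`). -/
def IsVariationalProjection (X : Set E) (u p : E) : Prop :=
  p ∈ X ∧ ∀ x ∈ X, ⟪u - p, x - p⟫ ≤ 0

namespace IsVariationalProjection

variable {X : Set E} {u p q : E}

theorem eq (hp : IsVariationalProjection X u p) (hq : IsVariationalProjection X u q) :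
    p = q := by
  have hpq := hp.2 q hq.1
  have hqp := hq.2 p hp.1
  have hsum : ⟪u - p, q - p⟫ + ⟪u - q, p - q⟫ = ‖p - q‖ ^ 2 := by
    rw [← real_inner_self_eq_norm_sq, ← neg_sub p q, inner_neg_right, ← sub_eq_neg_add,
      ← inner_sub_left, sub_sub_sub_cancel_left]
  rw [← sub_eq_zero, ← norm_eq_zero]
  nlinarith [norm_nonneg (p - q)]

theorem convexCombination (hp : IsVariationalProjection X u p) {t : ℝ} (ht : 0 ≤ t) :
    IsVariationalProjection X (t • u + (1 - t) • p) p := by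
  refine ⟨hp.1, fun x hx => ?_⟩
  have hshift : t • u + (1 - t) • p - p = t • (u - p) := by module
  rw [hshift, real_inner_smul_left]
  exact mul_nonpos_of_nonneg_of_nonpos ht (hp.2 x hx)

end IsVariationalProjection

theorem inner_sub_le_zero_of_isVariationalProjection {Y : Set E} {y p q : E} (hy : y ∈ Y)
    {α : ℝ} (hα1 : α < 1) (hq : IsVariationalProjection Y (α • y + (1 - α) • p) q) :
    ⟪y - p, α • y + (1 - α) • p - q⟫ ≤ 0 := by
  set z := α • y + (1 - α) • p
  have hsplit : y - q = (z - q) + (1 - α) • (y - p) := by simp only [z]; module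
  have htest := hq.2 y hy
  rw [hsplit, inner_add_right, real_inner_smul_right, real_inner_self_eq_norm_sq,
    real_inner_comm] at htest
  nlinarith [sq_nonneg ‖z - q‖]

theorem stmt_1_general {n : ℕ} {X Y : Set (EuclideanSpace ℝ (Fin n))}
    (PX PY : EuclideanSpace ℝ (Fin n) → EuclideanSpace ℝ (Fin n))
    (hPX : ∀ u, PX u ∈ X ∧ ∀ x ∈ X, ⟪u - PX u, x - PX u⟫ ≤ 0)
    (hPY : ∀ u, PY u ∈ Y ∧ ∀ x ∈ Y, ⟪u - PY u, x - PY u⟫ ≤ 0)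
    (y : EuclideanSpace ℝ (Fin n)) (hy : y ∈ Y)
    (α : ℝ) (hα : α ∈ Set.Ioo (0:ℝ) 1) :
    ⟪(α • y + (1 - α) • PX y) - PX (α • y + (1 - α) • PX y),
      (α • y + (1 - α) • PX y) - PY (α • y + (1 - α) • PX y)⟫ ≤ 0 := by
  obtain ⟨hα0, hα1⟩ := hα
  have hPXz : PX (α • y + (1 - α) • PX y) = PX y :=
    IsVariationalProjection.eq (hPX _) (IsVariationalProjection.convexCombination (hPX y) hα0.le)
  have hshift : α • y + (1 - α) • PX y - PX y = α • (y - PX y) := by module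
  rw [hPXz, hshift, real_inner_smul_left]
  exact mul_nonpos_of_nonneg_of_nonpos hα0.le
    (inner_sub_le_zero_of_isVariationalProjection hy hα1 (hPY _))

theorem stmt_1 {n : ℕ} {X Y : Set (EuclideanSpace ℝ (Fin n))}
    (hXne : X.Nonempty) (hXc : IsClosed X) (hXconv : Convex ℝ X)
    (hYne : Y.Nonempty) (hYc : IsClosed Y) (hYconv : Convex ℝ Y)
    (PX PY : EuclideanSpace ℝ (Fin n) → EuclideanSpace ℝ (Fin n))
    (hPX : ∀ u, PX u ∈ X ∧ ∀ x ∈ X, ⟪u - PX u, x - PX u⟫ ≤ 0)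
    (hPY : ∀ u, PY u ∈ Y ∧ ∀ x ∈ Y, ⟪u - PY u, x - PY u⟫ ≤ 0)
    (y : EuclideanSpace ℝ (Fin n)) (hy : y ∈ Y)
    (α : ℝ) (hα : α ∈ Set.Ioo (0:ℝ) 1) :
    ⟪(α • y + (1 - α) • PX y) - PX (α • y + (1 - α) • PX y),
      (α • y + (1 - α) • PX y) - PY (α • y + (1 - α) • PX y)⟫ ≤ 0 :=
  stmt_1_general PX PY hPX hPY y hy α hα
end

section
/- Let X, Y ⊂ R^n be nonempty closed convex sets, let y ∈ Y, let α ∈ (0,1), and set z := αy + (1−α)P_X(y). If ⟨z − P_X(z), z − P_Y(z)⟩ = 0 (i.e., z is centralized but not strictly centralized), then z ∈ Y. -/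
/-!
The point `z` lies on the ray from `P_X y` through `y`, so `P_X z = P_X y` and
`z - P_X z = α (y - P_X y)`. The hypothesis then makes `y - P_X y` orthogonal to `z - P_Y z`;
as `y - z` is a multiple of `y - P_X y`, the variational inequality of `P_Y z` tested at `y`
reduces to `‖z - P_Y z‖² ≤ 0`.
-/

open Metric Filter Topology
open scoped RealInnerProductSpace

/-- For closed convex `X` this characterizes `p` as the metric projection of `u` onto `X`. -/
def IsProjPoint {E : Type*} [NormedAddCommGroup E] [InnerProductSpace ℝ E]
    (X : Set E) (u p : E) : Prop :=
  p ∈ X ∧ ∀ x ∈ X, ⟪u - p, x - p⟫ ≤ 0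

namespace IsProjPoint

variable {E : Type*} [NormedAddCommGroup E] [InnerProductSpace ℝ E] {X : Set E} {u p q : E}

theorem unique (hp : IsProjPoint X u p) (hq : IsProjPoint X u q) : p = q := by
  have hpq := hp.2 q hq.1
  have hqp := hq.2 p hp.1
  have hsum : ⟪q - p, q - p⟫ = ⟪u - p, q - p⟫ + ⟪u - q, p - q⟫ := by
    rw [← neg_sub q p, inner_neg_right, ← sub_eq_add_neg, ← inner_sub_left]
    congr 1; abel
  have hnonpos : ⟪q - p, q - p⟫ ≤ 0 := by linarith
  exact (sub_eq_zero.mp (real_inner_self_nonpos.mp hnonpos)).symm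

theorem along_ray (hp : IsProjPoint X u p) {t : ℝ} (ht : 0 ≤ t) :
    IsProjPoint X (p + t • (u - p)) p := by
  refine ⟨hp.1, fun x hx => ?_⟩
  rw [add_sub_cancel_left, real_inner_smul_left]
  exact mul_nonpos_of_nonneg_of_nonpos ht (hp.2 x hx)

theorem mem_of_inner_nonneg (hq : IsProjPoint X u q) {y : E} (hy : y ∈ X)
    (h : 0 ≤ ⟪u - q, y - u⟫) : u ∈ X := by
  have hsplit : ⟪u - q, y - q⟫ = ⟪u - q, u - q⟫ + ⟪u - q, y - u⟫ := by
    rw [← inner_add_right]; congr 1; abel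
  have hnonpos : ⟪u - q, u - q⟫ ≤ 0 := by linarith [hq.2 y hy]
  exact sub_eq_zero.mp (real_inner_self_nonpos.mp hnonpos) ▸ hq.1

end IsProjPoint

theorem stmt_2_general {n : ℕ} {X Y : Set (EuclideanSpace ℝ (Fin n))}
    (PX PY : EuclideanSpace ℝ (Fin n) → EuclideanSpace ℝ (Fin n))
    (hPX : ∀ u, PX u ∈ X ∧ ∀ x ∈ X, ⟪u - PX u, x - PX u⟫ ≤ 0)
    (hPY : ∀ u, PY u ∈ Y ∧ ∀ x ∈ Y, ⟪u - PY u, x - PY u⟫ ≤ 0)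
    (y : EuclideanSpace ℝ (Fin n)) (hy : y ∈ Y)
    (α : ℝ) (hα : α ∈ Set.Ioo (0:ℝ) 1)
    (z : EuclideanSpace ℝ (Fin n)) (hz : z = α • y + (1 - α) • PX y)
    (heq : ⟪z - PX z, z - PY z⟫ = 0) :
    z ∈ Y := by
  have hα0 : 0 < α := hα.1
  have hz_ray : z = PX y + α • (y - PX y) := by rw [hz]; module
  have hPXz : PX z = PX y :=
    IsProjPoint.unique (hPX z) (hz_ray ▸ IsProjPoint.along_ray (hPX y) hα0.le)
  have hperp : ⟪y - PX y, z - PY z⟫ = 0 := by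
    have hzX : z - PX z = α • (y - PX y) := by rw [hPXz, hz_ray, add_sub_cancel_left]
    rw [hzX, real_inner_smul_left] at heq
    exact (mul_eq_zero.mp heq).resolve_left hα0.ne'
  have hyz : y - z = (1 - α) • (y - PX y) := by rw [hz]; module
  refine IsProjPoint.mem_of_inner_nonneg (hPY z) hy ?_
  rw [hyz, real_inner_smul_right, real_inner_comm, hperp, mul_zero]

theorem stmt_2 {n : ℕ} {X Y : Set (EuclideanSpace ℝ (Fin n))}
    (hXne : X.Nonempty) (hXc : IsClosed X) (hXconv : Convex ℝ X)
    (hYne : Y.Nonempty) (hYc : IsClosed Y) (hYconv : Convex ℝ Y)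
    (PX PY : EuclideanSpace ℝ (Fin n) → EuclideanSpace ℝ (Fin n))
    (hPX : ∀ u, PX u ∈ X ∧ ∀ x ∈ X, ⟪u - PX u, x - PX u⟫ ≤ 0)
    (hPY : ∀ u, PY u ∈ Y ∧ ∀ x ∈ Y, ⟪u - PY u, x - PY u⟫ ≤ 0)
    (y : EuclideanSpace ℝ (Fin n)) (hy : y ∈ Y)
    (α : ℝ) (hα : α ∈ Set.Ioo (0:ℝ) 1)
    (z : EuclideanSpace ℝ (Fin n)) (hz : z = α • y + (1 - α) • PX y)
    (heq : ⟪z - PX z, z - PY z⟫ = 0) :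
    z ∈ Y :=
  stmt_2_general PX PY hPX hPY y hy α hα z hz heq
end

section
/- Let X, Y ⊂ R^n be nonempty closed convex sets with S := X ∩ Y nonempty. Let y ∈ P_Y(X) \ S (i.e., y = P_Y(x) for some x ∈ X, and y ∉ S), let α ∈ (0,1), and set z := αy + (1−α)P_X(y). Then ⟨z − P_X(z), z − P_Y(z)⟩ < 0, i.e., z is strictly centralized relative to (X,Y). -/
open scoped RealInnerProductSpace

/-!
Write `p = P_X y`, so `z = p + α (y - p)`. Moving a point along the ray from its projection does not
change the projection, hence `P_X z = p` and `z - P_X z = α (y - p)`. Since `y = P_Y x` with `x ∈ X`,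
the variational inequalities at `y` and at `p` add up to `‖y - p‖² ≤ 0` as soon as some
`p + t (y - p)` with `t < 1` lies in `Y`; so `z ∉ Y`, i.e. `z ≠ P_Y z`. Finally the variational
inequality of `P_Y z` tested at `y ∈ Y` reads `(1 - α) ⟪z - P_Y z, y - p⟫ + ‖z - P_Y z‖² ≤ 0`.
-/

variable {E : Type*} [NormedAddCommGroup E] [InnerProductSpace ℝ E]

/-- The variational characterization of `p = P_K u`, equivalent to it for closed convex `K`. -/
def IsProjOn (K : Set E) (u p : E) : Prop :=
  p ∈ K ∧ ∀ x ∈ K, ⟪u - p, x - p⟫ ≤ 0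

namespace IsProjOn

variable {K : Set E} {u p : E}

theorem eq {p' : E} (hp : IsProjOn K u p) (hp' : IsProjOn K u p') : p = p' := by
  have h₁ := hp.2 p' hp'.1
  have h₂ := hp'.2 p hp.1
  have hsum : ⟪p - p', p - p'⟫ = ⟪u - p, p' - p⟫ + ⟪u - p', p - p'⟫ := by
    simp only [inner_sub_left, inner_sub_right, real_inner_comm]
    ring
  have hnorm : ‖p - p'‖ ^ 2 ≤ 0 := by
    rw [← real_inner_self_eq_norm_sq, hsum]
    linarith
  exact sub_eq_zero.mp (norm_eq_zero.mp (by nlinarith [norm_nonneg (p - p')]))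

theorem of_mem_ray {t : ℝ} (hp : IsProjOn K u p) (ht : 0 ≤ t) :
    IsProjOn K (p + t • (u - p)) p := by
  refine ⟨hp.1, fun x hx => ?_⟩
  rw [add_sub_cancel_left, real_inner_smul_left]
  exact mul_nonpos_of_nonneg_of_nonpos ht (hp.2 x hx)

theorem notMem_of_isProjOn_of_isProjOn {X Y : Set E} {x y p : E} {t : ℝ} (hx : x ∈ X)
    (hy : IsProjOn Y x y) (hp : IsProjOn X y p) (hyp : y ≠ p) (ht : t < 1) :
    p + t • (y - p) ∉ Y := by
  intro hmem
  have hY : ⟪x - y, p - y⟫ ≤ 0 := by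
    have h := hy.2 _ hmem
    have hseg : p + t • (y - p) - y = (1 - t) • (p - y) := by module
    rw [hseg, real_inner_smul_right] at h
    by_contra! hpos
    nlinarith
  have hX := hp.2 x hx
  have hsum : ⟪y - p, y - p⟫ = ⟪x - y, p - y⟫ + ⟪y - p, x - p⟫ := by
    simp only [inner_sub_left, inner_sub_right, real_inner_comm]
    ring
  have hpos : 0 < ⟪y - p, y - p⟫ := real_inner_self_pos.mpr (sub_ne_zero.mpr hyp)
  linarith

theorem inner_sub_neg_of_ne {Y : Set E} {y p q : E} {t : ℝ} (hq : IsProjOn Y (p + t • (y - p)) q)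
    (hy : y ∈ Y) (ht : t < 1) (hzq : p + t • (y - p) ≠ q) :
    ⟪y - p, p + t • (y - p) - q⟫ < 0 := by
  set z := p + t • (y - p)
  have h := hq.2 y hy
  have hyq : y - q = (1 - t) • (y - p) + (z - q) := by simp only [z]; module
  rw [hyq, inner_add_right, real_inner_smul_right, real_inner_comm] at h
  have hpos : 0 < ⟪z - q, z - q⟫ := real_inner_self_pos.mpr (sub_ne_zero.mpr hzq)
  nlinarith

end IsProjOn

theorem stmt_3_general {n : ℕ} {X Y : Set (EuclideanSpace ℝ (Fin n))}
    (PX PY : EuclideanSpace ℝ (Fin n) → EuclideanSpace ℝ (Fin n))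
    (hPX : ∀ u, PX u ∈ X ∧ ∀ x ∈ X, ⟪u - PX u, x - PX u⟫ ≤ 0)
    (hPY : ∀ u, PY u ∈ Y ∧ ∀ x ∈ Y, ⟪u - PY u, x - PY u⟫ ≤ 0)
    (y : EuclideanSpace ℝ (Fin n)) (hy : y ∈ (PY '' X) \ (X ∩ Y))
    (α : ℝ) (hα : α ∈ Set.Ioo (0:ℝ) 1)
    (z : EuclideanSpace ℝ (Fin n)) (hz : z = α • y + (1 - α) • PX y) :
    ⟪z - PX z, z - PY z⟫ < 0 := by
  obtain ⟨⟨x, hxX, rfl⟩, hyS⟩ := hy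
  obtain ⟨hα0, hα1⟩ := hα
  have hPX' : ∀ u, IsProjOn X u (PX u) := hPX
  have hPY' : ∀ u, IsProjOn Y u (PY u) := hPY
  set p := PX (PY x)
  have hyY : PY x ∈ Y := (hPY x).1
  have hyp : PY x ≠ p := fun h => hyS ⟨h ▸ (hPX _).1, hyY⟩
  obtain rfl : z = p + α • (PY x - p) := by rw [hz]; module
  set z := p + α • (PY x - p)
  have hPXz : PX z = p := (((hPX' _).of_mem_ray hα0.le).eq (hPX' _)).symm
  have hzY : z ∉ Y := IsProjOn.notMem_of_isProjOn_of_isProjOn hxX (hPY' x) (hPX' _) hyp hα1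
  have hzq : z ≠ PY z := fun h => hzY (h ▸ (hPY z).1)
  rw [hPXz, add_sub_cancel_left, real_inner_smul_left]
  exact mul_neg_of_pos_of_neg hα0 ((hPY' z).inner_sub_neg_of_ne hyY hα1 hzq)

theorem stmt_3 {n : ℕ} {X Y : Set (EuclideanSpace ℝ (Fin n))}
    (hXne : X.Nonempty) (hXc : IsClosed X) (hXconv : Convex ℝ X)
    (hYne : Y.Nonempty) (hYc : IsClosed Y) (hYconv : Convex ℝ Y)
    (hS : (X ∩ Y).Nonempty)
    (PX PY : EuclideanSpace ℝ (Fin n) → EuclideanSpace ℝ (Fin n))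
    (hPX : ∀ u, PX u ∈ X ∧ ∀ x ∈ X, ⟪u - PX u, x - PX u⟫ ≤ 0)
    (hPY : ∀ u, PY u ∈ Y ∧ ∀ x ∈ Y, ⟪u - PY u, x - PY u⟫ ≤ 0)
    (y : EuclideanSpace ℝ (Fin n)) (hy : y ∈ (PY '' X) \ (X ∩ Y))
    (α : ℝ) (hα : α ∈ Set.Ioo (0:ℝ) 1)
    (z : EuclideanSpace ℝ (Fin n)) (hz : z = α • y + (1 - α) • PX y) :
    ⟪z - PX z, z - PY z⟫ < 0 :=
  stmt_3_general PX PY hPX hPY y hy α hα z hz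
end

section
/- Let S ⊂ R^n be nonempty and let (z_k) be a sequence that is Fejér monotone with respect to S (i.e., ‖z_{k+1} − s‖ ≤ ‖z_k − s‖ for all s ∈ S and all k). If dist(z_k, X) → 0 and dist(z_k, Y) → 0 for closed sets X, Y with S = X ∩ Y ≠ ∅, then (z_k) converges to some point of S. -/
/-! A Fejér monotone sequence stays in a ball around any point of `S`, so in `ℝⁿ` it has a
cluster point `p`. Since the distances to `X` and `Y` tend to `0` and both sets are closed,
`p ∈ X ∩ Y = S`. Fejér monotonicity then makes `k ↦ dist (z k) p` antitone, and an antitone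
sequence of distances that is frequently small tends to `0`. -/

open Metric Filter Topology

section FejerMonotone

variable {α : Type*} [PseudoMetricSpace α]

theorem tendsto_of_antitone_dist_of_mapClusterPt {z : ℕ → α} {p : α}
    (hanti : Antitone fun k => dist (z k) p) (hp : MapClusterPt p atTop z) :
    Tendsto z atTop (𝓝 p) := by
  refine Metric.tendsto_atTop.2 fun ε hε => ?_
  obtain ⟨N, -, hN⟩ := frequently_atTop.1 (hp.frequently (ball_mem_nhds p hε)) 0
  exact ⟨N, fun k hk => (hanti hk).trans_lt hN⟩

theorem mem_of_mapClusterPt_of_tendsto_infDist {z : ℕ → α} {X : Set α} {p : α}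
    (hX : IsClosed X) (hXne : X.Nonempty)
    (hdist : Tendsto (fun k => infDist (z k) X) atTop (𝓝 0)) (hp : MapClusterPt p atTop z) :
    p ∈ X := by
  have hcluster : MapClusterPt (infDist p X) atTop ((infDist · X) ∘ z) :=
    hp.continuousAt_comp (continuous_infDist_pt X).continuousAt (x := p)
  exact (hX.mem_iff_infDist_zero hXne).2 (eq_of_nhds_neBot (hcluster.clusterPt.mono hdist))

theorem exists_tendsto_of_antitone_dist_of_mapClusterPt_mem [ProperSpace α] {z : ℕ → α}
    {S : Set α} (hSne : S.Nonempty)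
    (hFejer : ∀ s ∈ S, Antitone fun k => dist (z k) s)
    (hcluster : ∀ p, MapClusterPt p atTop z → p ∈ S) :
    ∃ p ∈ S, Tendsto z atTop (𝓝 p) := by
  obtain ⟨s, hs⟩ := hSne
  have hball : ∀ k, z k ∈ closedBall s (dist (z 0) s) := fun k => hFejer s hs (Nat.zero_le k)
  obtain ⟨p, -, hp⟩ := (isCompact_closedBall s (dist (z 0) s)).exists_mapClusterPt
    (f := atTop) (tendsto_principal.2 (.of_forall hball))
  have hpS := hcluster p hp
  exact ⟨p, hpS, tendsto_of_antitone_dist_of_mapClusterPt (hFejer p hpS) hp⟩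

end FejerMonotone

theorem stmt_5 {n : ℕ} {X Y S : Set (EuclideanSpace ℝ (Fin n))}
    (hXc : IsClosed X) (hYc : IsClosed Y) (hSdef : S = X ∩ Y) (hSne : S.Nonempty)
    (z : ℕ → EuclideanSpace ℝ (Fin n))
    (hFejer : ∀ s ∈ S, ∀ k : ℕ, ‖z (k+1) - s‖ ≤ ‖z k - s‖)
    (hdX : Tendsto (fun k => infDist (z k) X) atTop (𝓝 0))
    (hdY : Tendsto (fun k => infDist (z k) Y) atTop (𝓝 0)) :
    ∃ p ∈ S, Tendsto z atTop (𝓝 p) := by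
  subst hSdef
  refine exists_tendsto_of_antitone_dist_of_mapClusterPt_mem hSne
    (fun s hs => antitone_nat_of_succ_le fun k => ?_) ?_
  · simpa only [dist_eq_norm] using hFejer s hs k
  · intro p hp
    obtain ⟨s, hsX, hsY⟩ := hSne
    exact ⟨mem_of_mapClusterPt_of_tendsto_infDist hXc ⟨s, hsX⟩ hdX hp,
      mem_of_mapClusterPt_of_tendsto_infDist hYc ⟨s, hsY⟩ hdY hp⟩
end

section
/- Let S ⊂ R^n be nonempty and let (z_k) be Fejér monotone with respect to S. If (z_k) converges to a point z̄, then for every k, dist(z_k, S) ≥ (1/2)‖z_k − z̄‖. -/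
open Metric Filter Topology

def FejerMonotone {X : Type*} [PseudoMetricSpace X] (S : Set X) (z : ℕ → X) : Prop :=
  ∀ s ∈ S, Antitone fun k => dist (z k) s

namespace FejerMonotone

variable {X : Type*} [PseudoMetricSpace X] {S : Set X} {z : ℕ → X} {zbar : X}

theorem dist_limit_le (hz : FejerMonotone S z) (hlim : Tendsto z atTop (𝓝 zbar))
    {s : X} (hs : s ∈ S) (k : ℕ) : dist zbar s ≤ dist (z k) s :=
  (hz s hs).le_of_tendsto (hlim.dist tendsto_const_nhds) k

theorem dist_limit_le_two_mul_dist (hz : FejerMonotone S z) (hlim : Tendsto z atTop (𝓝 zbar))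
    {s : X} (hs : s ∈ S) (k : ℕ) : dist (z k) zbar ≤ 2 * dist (z k) s :=
  calc dist (z k) zbar ≤ dist (z k) s + dist zbar s := dist_triangle_right _ _ _
    _ ≤ 2 * dist (z k) s := by linarith [hz.dist_limit_le hlim hs k]

theorem half_dist_limit_le_infDist (hz : FejerMonotone S z) (hS : S.Nonempty)
    (hlim : Tendsto z atTop (𝓝 zbar)) (k : ℕ) : dist (z k) zbar / 2 ≤ infDist (z k) S :=
  (le_infDist hS).2 fun _ hs => by linarith [hz.dist_limit_le_two_mul_dist hlim hs k]

end FejerMonotone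

theorem stmt_6 {n : ℕ} {S : Set (EuclideanSpace ℝ (Fin n))} (hSne : S.Nonempty)
    (z : ℕ → EuclideanSpace ℝ (Fin n))
    (hFejer : ∀ s ∈ S, ∀ k : ℕ, ‖z (k+1) - s‖ ≤ ‖z k - s‖)
    (zbar : EuclideanSpace ℝ (Fin n)) (hlim : Tendsto z atTop (𝓝 zbar)) :
    ∀ k : ℕ, (1/2 : ℝ) * ‖z k - zbar‖ ≤ infDist (z k) S := by
  have hz : FejerMonotone S z := fun s hs =>
    antitone_nat_of_succ_le fun k => by simpa only [dist_eq_norm] using hFejer s hs k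
  intro k
  simpa only [dist_eq_norm, one_div, inv_mul_eq_div] using hz.half_dist_limit_le_infDist hSne hlim k
end

section
/- Let S ⊂ R^n be nonempty closed and let (z_k) be Fejér monotone with respect to S. Suppose dist(z_k, S) → 0 Q-linearly with ratio ρ ∈ (0,1), i.e., limsup dist(z_{k+1},S)/dist(z_k,S) ≤ ρ. Then (z_k) converges R-linearly to a point z̄ ∈ S with asymptotic rate at most ρ, i.e., limsup ‖z_k − z̄‖^{1/k} ≤ ρ. -/
/-!
Write `d k = infDist (z k) S`. Fejér monotonicity makes `d` nonincreasing and, going through any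
`s ∈ S`, bounds the step `dist (z k) (z (k + 1))` by `2 d k`. The ratio bound gives
`d k ≤ C σ ^ k` for every `σ ∈ (ρ, 1)`, so the steps are geometrically summable: `z` is Cauchy,
its limit lies in `S` because `d k → 0`, and the tail sums give `‖z k - z̄‖ ≤ C' σ ^ k`, whose
`k`-th roots have limsup at most `σ`.
-/

open Metric Filter Topology

def IsFejerMonotone {X : Type*} [PseudoMetricSpace X] (z : ℕ → X) (S : Set X) : Prop :=
  ∀ s ∈ S, ∀ k, dist (z (k + 1)) s ≤ dist (z k) s

section RealSequences

variable {d : ℕ → ℝ} {σ : ℝ}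

theorem eventually_le_mul_of_limsup_div_lt (hd : ∀ k, 0 ≤ d k) (hanti : Antitone d)
    (h : limsup (fun k => d (k + 1) / d k) atTop < σ) :
    ∀ᶠ k in atTop, d (k + 1) ≤ σ * d k := by
  have hbdd : IsBoundedUnder (· ≤ ·) atTop (fun k => d (k + 1) / d k) :=
    ⟨1, eventually_map.2 (.of_forall fun k => div_le_one_of_le₀ (hanti k.le_succ) (hd k))⟩
  filter_upwards [eventually_lt_of_limsup_lt h hbdd] with k hk
  -- at `d k = 0` the ratio is the junk value `0`; antitonicity then forces `d (k + 1) = 0`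
  rcases (hd k).eq_or_lt with h0 | hpos
  · simpa [← h0] using hanti k.le_succ
  · exact ((div_lt_iff₀ hpos).1 hk).le

theorem exists_le_geometric_of_eventually_le_mul (hd : ∀ k, 0 ≤ d k) (hanti : Antitone d)
    (hσ0 : 0 < σ) (hσ1 : σ ≤ 1) (h : ∀ᶠ k in atTop, d (k + 1) ≤ σ * d k) :
    ∃ C, ∀ k, d k ≤ C * σ ^ k := by
  obtain ⟨N, hN⟩ := eventually_atTop.1 h
  have htail : ∀ m, d (N + m) ≤ d N * σ ^ m := by
    intro m
    induction m with
    | zero => simp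
    | succ m ih =>
      calc d (N + (m + 1)) ≤ σ * d (N + m) := hN (N + m) (Nat.le_add_right N m)
        _ ≤ σ * (d N * σ ^ m) := mul_le_mul_of_nonneg_left ih hσ0.le
        _ = d N * σ ^ (m + 1) := by ring
  refine ⟨d 0 / σ ^ N, fun k => ?_⟩
  rcases le_or_gt N k with hNk | hkN
  · obtain ⟨m, rfl⟩ := Nat.exists_eq_add_of_le hNk
    calc d (N + m) ≤ d N * σ ^ m := htail m
      _ ≤ d 0 * σ ^ m := mul_le_mul_of_nonneg_right (hanti N.zero_le) (pow_nonneg hσ0.le m)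
      _ = d 0 / σ ^ N * σ ^ (N + m) := by field_simp; ring
  · calc d k ≤ d 0 := hanti k.zero_le
      _ ≤ d 0 / σ ^ N * σ ^ k := by
        rw [div_mul_eq_mul_div, le_div_iff₀ (pow_pos hσ0 N)]
        exact mul_le_mul_of_nonneg_left (pow_le_pow_of_le_one hσ0.le hσ1 hkN.le) (hd 0)

theorem limsup_rpow_inv_le_of_le_geometric (hd : ∀ k, 0 ≤ d k) (hσ0 : 0 < σ) {C : ℝ}
    (hC : ∀ k, d k ≤ C * σ ^ k) :
    limsup (fun k : ℕ => d k ^ (k : ℝ)⁻¹) atTop ≤ σ := by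
  set K := max C 1
  have hK0 : 0 < K := one_pos.trans_le (le_max_right C 1)
  have hroot : ∀ᶠ k : ℕ in atTop, d k ^ (k : ℝ)⁻¹ ≤ K ^ (k : ℝ)⁻¹ * σ := by
    filter_upwards [eventually_ne_atTop 0] with k hk
    calc d k ^ (k : ℝ)⁻¹ ≤ (K * σ ^ k) ^ (k : ℝ)⁻¹ :=
          Real.rpow_le_rpow (hd k) ((hC k).trans (mul_le_mul_of_nonneg_right
            (le_max_left C 1) (pow_nonneg hσ0.le k))) (by positivity)
      _ = K ^ (k : ℝ)⁻¹ * σ := by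
          rw [Real.mul_rpow hK0.le (pow_nonneg hσ0.le k), ← Real.rpow_natCast σ k,
            ← Real.rpow_mul hσ0.le, mul_inv_cancel₀ (Nat.cast_ne_zero.2 hk), Real.rpow_one]
  have hlim : Tendsto (fun k : ℕ => K ^ (k : ℝ)⁻¹ * σ) atTop (𝓝 σ) := by
    have hexp : Tendsto (fun k : ℕ => (k : ℝ)⁻¹) atTop (𝓝 0) :=
      tendsto_inv_atTop_zero.comp tendsto_natCast_atTop_atTop
    simpa using ((Real.continuousAt_const_rpow hK0.ne').tendsto.comp hexp).mul_const σ
  calc limsup (fun k : ℕ => d k ^ (k : ℝ)⁻¹) atTop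
      ≤ limsup (fun k : ℕ => K ^ (k : ℝ)⁻¹ * σ) atTop :=
        limsup_le_limsup hroot
          (isCoboundedUnder_le_of_le atTop fun k => Real.rpow_nonneg (hd k) _)
          hlim.isBoundedUnder_le
    _ = σ := hlim.limsup_eq

end RealSequences

namespace IsFejerMonotone

variable {X : Type*} [PseudoMetricSpace X] {z : ℕ → X} {S : Set X}

theorem infDist_succ_le (h : IsFejerMonotone z S) (k : ℕ) :
    infDist (z (k + 1)) S ≤ infDist (z k) S := by
  rcases S.eq_empty_or_nonempty with rfl | hS
  · simp
  · exact (le_infDist hS).2 fun s hs => (infDist_le_dist_of_mem hs).trans (h s hs k)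

theorem antitone_infDist (h : IsFejerMonotone z S) : Antitone fun k => infDist (z k) S :=
  antitone_nat_of_succ_le h.infDist_succ_le

theorem dist_succ_le (h : IsFejerMonotone z S) (hS : S.Nonempty) (k : ℕ) :
    dist (z k) (z (k + 1)) ≤ 2 * infDist (z k) S := by
  rw [← div_le_iff₀' two_pos, le_infDist hS]
  intro s hs
  have := dist_triangle_right (z k) (z (k + 1)) s
  linarith [h s hs k]

theorem exists_infDist_le_geometric (h : IsFejerMonotone z S) {σ : ℝ} (hσ0 : 0 < σ)
    (hσ1 : σ ≤ 1) (hQ : limsup (fun k => infDist (z (k + 1)) S / infDist (z k) S) atTop < σ) :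
    ∃ C, ∀ k, infDist (z k) S ≤ C * σ ^ k :=
  exists_le_geometric_of_eventually_le_mul (fun _ => infDist_nonneg) h.antitone_infDist hσ0 hσ1
    (eventually_le_mul_of_limsup_div_lt (fun _ => infDist_nonneg) h.antitone_infDist hQ)

theorem dist_succ_le_geometric (h : IsFejerMonotone z S) (hS : S.Nonempty) {σ C : ℝ}
    (hd : ∀ k, infDist (z k) S ≤ C * σ ^ k) (k : ℕ) :
    dist (z k) (z (k + 1)) ≤ 2 * C * σ ^ k :=
  (h.dist_succ_le hS k).trans (by rw [mul_assoc]; gcongr; exact hd k)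

theorem dist_le_geometric_of_tendsto (h : IsFejerMonotone z S) (hS : S.Nonempty) {σ C : ℝ}
    (hσ1 : σ < 1) (hd : ∀ k, infDist (z k) S ≤ C * σ ^ k) {zbar : X}
    (hz : Tendsto z atTop (𝓝 zbar)) (k : ℕ) :
    dist (z k) zbar ≤ 2 * C / (1 - σ) * σ ^ k :=
  (dist_le_of_le_geometric_of_tendsto σ _ hσ1 (h.dist_succ_le_geometric hS hd) hz k).trans_eq
    (by ring)

theorem exists_tendsto_mem [CompleteSpace X] (h : IsFejerMonotone z S) (hS : S.Nonempty)
    (hSc : IsClosed S) {σ C : ℝ} (hσ0 : 0 ≤ σ) (hσ1 : σ < 1)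
    (hd : ∀ k, infDist (z k) S ≤ C * σ ^ k) :
    ∃ zbar ∈ S, Tendsto z atTop (𝓝 zbar) := by
  obtain ⟨zbar, hz⟩ := cauchySeq_tendsto_of_complete <|
    cauchySeq_of_le_geometric σ _ hσ1 (h.dist_succ_le_geometric hS hd)
  have hd0 : Tendsto (fun k => infDist (z k) S) atTop (𝓝 0) :=
    squeeze_zero (fun _ => infDist_nonneg) hd <| by
      simpa using (tendsto_pow_atTop_nhds_zero_of_lt_one hσ0 hσ1).const_mul C
  refine ⟨zbar, (hSc.mem_iff_infDist_zero hS).2 ?_, hz⟩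
  exact tendsto_nhds_unique ((continuous_infDist_pt S).continuousAt.tendsto.comp hz) hd0

end IsFejerMonotone

theorem stmt_7_general {n : ℕ} {S : Set (EuclideanSpace ℝ (Fin n))}
    (hSne : S.Nonempty) (hSc : IsClosed S)
    (z : ℕ → EuclideanSpace ℝ (Fin n))
    (hFejer : ∀ s ∈ S, ∀ k : ℕ, ‖z (k+1) - s‖ ≤ ‖z k - s‖)
    (ρ : ℝ) (hρ : ρ ∈ Set.Ioo (0:ℝ) 1)
    (hQ : Filter.limsup (fun k => infDist (z (k+1)) S / infDist (z k) S) atTop ≤ ρ) :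
    ∃ zbar ∈ S, Tendsto z atTop (𝓝 zbar) ∧
      Filter.limsup (fun k : ℕ => ‖z k - zbar‖ ^ ((k : ℝ))⁻¹) atTop ≤ ρ := by
  obtain ⟨hρ0, hρ1⟩ := hρ
  have hF : IsFejerMonotone z S := by simpa only [IsFejerMonotone, dist_eq_norm] using hFejer
  have geom : ∀ σ, ρ < σ → σ < 1 → ∃ C, ∀ k, infDist (z k) S ≤ C * σ ^ k := fun σ hρσ hσ1 =>
    hF.exists_infDist_le_geometric (hρ0.trans hρσ) hσ1.le (hQ.trans_lt hρσ)
  obtain ⟨σ₀, hρσ₀, hσ₀1⟩ := exists_between hρ1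
  obtain ⟨C₀, hC₀⟩ := geom σ₀ hρσ₀ hσ₀1
  obtain ⟨zbar, hzbar, hz⟩ := hF.exists_tendsto_mem hSne hSc (hρ0.trans hρσ₀).le hσ₀1 hC₀
  refine ⟨zbar, hzbar, hz, le_of_forall_gt_imp_ge_of_dense fun c hc => ?_⟩
  have hρσ : ρ < min c σ₀ := lt_min hc hρσ₀
  have hσ1 : min c σ₀ < 1 := (min_le_right c σ₀).trans_lt hσ₀1
  obtain ⟨C, hC⟩ := geom _ hρσ hσ1
  calc limsup (fun k : ℕ => ‖z k - zbar‖ ^ (k : ℝ)⁻¹) atTop ≤ min c σ₀ :=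
        limsup_rpow_inv_le_of_le_geometric (fun _ => norm_nonneg _) (hρ0.trans hρσ) fun k => by
          simpa only [dist_eq_norm] using hF.dist_le_geometric_of_tendsto hSne hσ1 hC hz k
    _ ≤ c := min_le_left c σ₀

theorem stmt_7 {n : ℕ} {S : Set (EuclideanSpace ℝ (Fin n))}
    (hSne : S.Nonempty) (hSc : IsClosed S)
    (z : ℕ → EuclideanSpace ℝ (Fin n))
    (hFejer : ∀ s ∈ S, ∀ k : ℕ, ‖z (k+1) - s‖ ≤ ‖z k - s‖)
    (ρ : ℝ) (hρ : ρ ∈ Set.Ioo (0:ℝ) 1)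
    (hdist0 : Tendsto (fun k => infDist (z k) S) atTop (𝓝 0))
    (hQ : Filter.limsup (fun k => infDist (z (k+1)) S / infDist (z k) S) atTop ≤ ρ) :
    ∃ zbar ∈ S, Tendsto z atTop (𝓝 zbar) ∧
      Filter.limsup (fun k : ℕ => ‖z k - zbar‖ ^ ((k : ℝ))⁻¹) atTop ≤ ρ :=
  stmt_7_general hSne hSc z hFejer ρ hρ hQ
end

section
/- Let X, Y ⊂ R^n be closed convex sets with S := X ∩ Y ≠ ∅, let z be centralized relative to (X,Y), and let c := PCRM(z) denote the circumcenter of {z, R_X(z), R_Y(z)}, which equals the projection of z onto S_X^z ∩ S_Y^z where S_X^z := {w : ⟨w − P_X(z), z − P_X(z)⟩ ≤ 0} and S_Y^z := {w : ⟨w − P_Y(z), z − P_Y(z)⟩ ≤ 0}. Then ‖z − c‖ ≥ max{δ(z), δ(c)}, where δ(w) := max{dist(w,X), dist(w,Y)}. -/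
open Metric
open scoped RealInnerProductSpace

/-! A point `c` of the supporting half-space `S_X^z` sees `z` and `P_X z` under a non-acute angle
at `P_X z`, so `‖z - c‖` is the hypotenuse of a triangle whose legs `‖z - P_X z‖` and
`‖c - P_X z‖` bound `dist(z, X)` and `dist(c, X)`; likewise for `Y`. -/

section InnerProductSpace

variable {E : Type*} [NormedAddCommGroup E] [InnerProductSpace ℝ E]

theorem norm_sub_sq_add_norm_sub_sq_le_of_inner_nonpos {z c p : E} (h : ⟪c - p, z - p⟫ ≤ 0) :
    ‖z - p‖ ^ 2 + ‖c - p‖ ^ 2 ≤ ‖z - c‖ ^ 2 := by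
  have hsplit : z - c = (z - p) - (c - p) := by abel
  rw [hsplit, norm_sub_sq_real (z - p) (c - p), real_inner_comm]
  linarith

theorem infDist_le_norm_sub_of_inner_nonpos {s : Set E} {z c p : E} (hp : p ∈ s)
    (h : ⟪c - p, z - p⟫ ≤ 0) : infDist z s ≤ ‖z - c‖ ∧ infDist c s ≤ ‖z - c‖ := by
  have hpyth := norm_sub_sq_add_norm_sub_sq_le_of_inner_nonpos h
  have hz : ‖z - p‖ ≤ ‖z - c‖ :=
    le_of_pow_le_pow_left₀ two_ne_zero (norm_nonneg _) (by linarith [sq_nonneg ‖c - p‖])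
  have hc : ‖c - p‖ ≤ ‖z - c‖ :=
    le_of_pow_le_pow_left₀ two_ne_zero (norm_nonneg _) (by linarith [sq_nonneg ‖z - p‖])
  exact ⟨(infDist_le_dist_of_mem hp).trans (dist_eq_norm z p ▸ hz),
    (infDist_le_dist_of_mem hp).trans (dist_eq_norm c p ▸ hc)⟩

end InnerProductSpace

theorem stmt_9_general {n : ℕ} {X Y : Set (EuclideanSpace ℝ (Fin n))}
    (PX PY : EuclideanSpace ℝ (Fin n) → EuclideanSpace ℝ (Fin n))
    (hPX : ∀ u, PX u ∈ X ∧ ∀ x ∈ X, ⟪u - PX u, x - PX u⟫ ≤ 0)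
    (hPY : ∀ u, PY u ∈ Y ∧ ∀ x ∈ Y, ⟪u - PY u, x - PY u⟫ ≤ 0)
    (z : EuclideanSpace ℝ (Fin n))
    (c : EuclideanSpace ℝ (Fin n))
    (hcmem : c ∈ {w | ⟪w - PX z, z - PX z⟫ ≤ 0} ∩ {w | ⟪w - PY z, z - PY z⟫ ≤ 0}) :
    max (max (infDist z X) (infDist z Y)) (max (infDist c X) (infDist c Y)) ≤ ‖z - c‖ := by
  obtain ⟨hSX, hSY⟩ := hcmem
  obtain ⟨hzX, hcX⟩ := infDist_le_norm_sub_of_inner_nonpos (hPX z).1 hSX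
  obtain ⟨hzY, hcY⟩ := infDist_le_norm_sub_of_inner_nonpos (hPY z).1 hSY
  exact max_le (max_le hzX hzY) (max_le hcX hcY)

theorem stmt_9 {n : ℕ} {X Y : Set (EuclideanSpace ℝ (Fin n))}
    (hXc : IsClosed X) (hXconv : Convex ℝ X)
    (hYc : IsClosed Y) (hYconv : Convex ℝ Y)
    (hS : (X ∩ Y).Nonempty)
    (PX PY : EuclideanSpace ℝ (Fin n) → EuclideanSpace ℝ (Fin n))
    (hPX : ∀ u, PX u ∈ X ∧ ∀ x ∈ X, ⟪u - PX u, x - PX u⟫ ≤ 0)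
    (hPY : ∀ u, PY u ∈ Y ∧ ∀ x ∈ Y, ⟪u - PY u, x - PY u⟫ ≤ 0)
    (z : EuclideanSpace ℝ (Fin n))
    (hcent : ⟪z - PX z, z - PY z⟫ ≤ 0)
    (c : EuclideanSpace ℝ (Fin n))
    (hcmem : c ∈ {w | ⟪w - PX z, z - PX z⟫ ≤ 0} ∩ {w | ⟪w - PY z, z - PY z⟫ ≤ 0})
    (hcproj : ∀ w ∈ {w | ⟪w - PX z, z - PX z⟫ ≤ 0} ∩ {w | ⟪w - PY z, z - PY z⟫ ≤ 0},
      ⟪z - c, w - c⟫ ≤ 0) :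
    max (max (infDist z X) (infDist z Y)) (max (infDist c X) (infDist c Y)) ≤ ‖z - c‖ :=
  stmt_9_general PX PY hPX hPY z c hcmem
end

section
/- Under the hypotheses of the ecCRM iteration (admissible T, α_k ∈ (0,1), z_{k+1} = PCRM(N^{α_k} z_k)), for every s ∈ S and every k: ‖s − z_{k+1}‖² ≤ ‖s − z_k‖² − δ(z_{k+1})², where δ(w) := max{dist(w,X), dist(w,Y)}. Consequently, Σ_{k≥1} δ(z_k)² ≤ dist(z_0, S)² < ∞ and δ(z_k) → 0. -/
/-!
Write `u = T z`, `w = α u + (1 - α) P_X u` and `z⁺ = C w`. Moving `u` towards `P_X u` keeps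
`P_X w = P_X u`, and since `u ∈ Y` the point `w` is centralized, so `z⁺` is the projection of `w`
onto the intersection of the two supporting half-spaces, which contains `S`. The obtuse angle at
`z⁺` gives `‖s - z⁺‖² + ‖w - z⁺‖² ≤ ‖s - w‖²`; as `z⁺` lies in both half-spaces,
`‖w - z⁺‖ ≥ δ(z⁺)`, and `‖s - w‖ ≤ ‖s - z‖` because `T` and `P_X` are quasi-nonexpansive.
Telescoping this Fejér inequality bounds the series by `‖s - z₀‖²` for every `s ∈ S`.
-/

open Metric Filter Topology
open scoped RealInnerProductSpace

section InnerProductSpace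

variable {E : Type*} [NormedAddCommGroup E] [InnerProductSpace ℝ E]

/-- The half-space `S_K^w` of the paper, taken with `p = P_K w`. -/
def supportingHalfspace (w p : E) : Set E := {v | ⟪v - p, w - p⟫ ≤ 0}

lemma eq_of_forall_inner_sub_nonpos {K : Set E} {w p q : E} (hp : p ∈ K) (hq : q ∈ K)
    (hpK : ∀ x ∈ K, ⟪w - p, x - p⟫ ≤ 0) (hqK : ∀ x ∈ K, ⟪w - q, x - q⟫ ≤ 0) : p = q := by
  have hsum : ⟪p - q, p - q⟫ = ⟪w - q, p - q⟫ + ⟪w - p, q - p⟫ := by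
    simp only [inner_sub_left, inner_sub_right, real_inner_comm]; ring
  have hnonpos : ⟪p - q, p - q⟫ ≤ 0 := hsum ▸ add_nonpos (hqK p hp) (hpK q hq)
  exact sub_eq_zero.mp (real_inner_self_nonpos.mp hnonpos)

lemma norm_sub_sq_add_norm_sub_sq_le {w c s : E} (h : ⟪w - c, s - c⟫ ≤ 0) :
    ‖s - c‖ ^ 2 + ‖w - c‖ ^ 2 ≤ ‖s - w‖ ^ 2 := by
  have hexpand := norm_sub_sq_real (s - c) (w - c)
  rw [sub_sub_sub_cancel_right, real_inner_comm] at hexpand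
  linarith

lemma norm_sub_le_of_inner_sub_nonpos {w c s : E} (h : ⟪w - c, s - c⟫ ≤ 0) :
    ‖s - c‖ ≤ ‖s - w‖ :=
  pow_le_pow_iff_left₀ (norm_nonneg _) (norm_nonneg _) two_ne_zero |>.mp <|
    le_of_add_le_of_nonneg_left (norm_sub_sq_add_norm_sub_sq_le h) (sq_nonneg _)

lemma infDist_le_norm_sub_of_mem_supportingHalfspace {K : Set E} {w p c : E} (hp : p ∈ K)
    (hc : c ∈ supportingHalfspace w p) : infDist c K ≤ ‖c - w‖ := by
  calc infDist c K ≤ ‖c - p‖ := dist_eq_norm c p ▸ infDist_le_dist_of_mem hp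
    _ ≤ ‖c - w‖ := norm_sub_le_of_inner_sub_nonpos (real_inner_comm (c - p) _ ▸ hc)

/-- One CRM step from a point `w`, given the projections `p`, `q` of `w` onto `X`, `Y` and the
projection `c` of `w` onto the intersection of the two supporting half-spaces. -/
lemma norm_sub_sq_add_max_infDist_sq_le {X Y : Set E} {w p q c s : E}
    (hp : p ∈ X) (hpX : ∀ x ∈ X, ⟪w - p, x - p⟫ ≤ 0)
    (hq : q ∈ Y) (hqY : ∀ y ∈ Y, ⟪w - q, y - q⟫ ≤ 0)
    (hc : c ∈ supportingHalfspace w p ∩ supportingHalfspace w q)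
    (hcmin : ∀ v ∈ supportingHalfspace w p ∩ supportingHalfspace w q, ⟪w - c, v - c⟫ ≤ 0)
    (hs : s ∈ X ∩ Y) :
    ‖s - c‖ ^ 2 + max (infDist c X) (infDist c Y) ^ 2 ≤ ‖s - w‖ ^ 2 := by
  have hsH : s ∈ supportingHalfspace w p ∩ supportingHalfspace w q :=
    ⟨(real_inner_comm _ _).trans_le (hpX s hs.1), (real_inner_comm _ _).trans_le (hqY s hs.2)⟩
  have hδ : max (infDist c X) (infDist c Y) ≤ ‖w - c‖ := by
    rw [norm_sub_rev]
    exact max_le (infDist_le_norm_sub_of_mem_supportingHalfspace hp hc.1)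
      (infDist_le_norm_sub_of_mem_supportingHalfspace hq hc.2)
  have hδsq := pow_le_pow_left₀ (le_max_of_le_left infDist_nonneg) hδ 2
  linarith [norm_sub_sq_add_norm_sub_sq_le (hcmin s hsH)]

lemma forall_inner_combo_sub_nonpos {K : Set E} {u p : E} {a : ℝ} (ha : 0 ≤ a)
    (hpK : ∀ x ∈ K, ⟪u - p, x - p⟫ ≤ 0) :
    ∀ x ∈ K, ⟪a • u + (1 - a) • p - p, x - p⟫ ≤ 0 := by
  intro x hx
  have hw : a • u + (1 - a) • p - p = a • (u - p) := by module
  rw [hw, real_inner_smul_left]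
  exact mul_nonpos_of_nonneg_of_nonpos ha (hpK x hx)

/-- If `q` is the projection of `w = a • u + (1 - a) • p` onto a set containing `u`, then `w`
is centralized with respect to `p` and `q`. -/
lemma inner_combo_sub_combo_sub_nonpos {u p q : E} {a : ℝ} (ha₀ : 0 ≤ a) (ha₁ : a < 1)
    (h : ⟪a • u + (1 - a) • p - q, u - q⟫ ≤ 0) :
    ⟪a • u + (1 - a) • p - p, a • u + (1 - a) • p - q⟫ ≤ 0 := by
  set w := a • u + (1 - a) • p
  have hwp : w - p = a • (u - p) := by module
  have huq : u - q = (1 - a) • (u - p) + (w - q) := by module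
  rw [huq, inner_add_right, real_inner_smul_right, real_inner_comm] at h
  have hupw : ⟪u - p, w - q⟫ ≤ 0 :=
    nonpos_of_mul_nonpos_right (by linarith [real_inner_self_nonneg (x := w - q)])
      (sub_pos.mpr ha₁)
  rw [hwp, real_inner_smul_left]
  exact mul_nonpos_of_nonneg_of_nonpos ha₀ hupw

lemma norm_sub_combo_le {s u p z : E} {a : ℝ} (ha₀ : 0 ≤ a) (ha₁ : a ≤ 1)
    (hu : ‖u - s‖ ≤ ‖z - s‖) (hp : ‖p - s‖ ≤ ‖z - s‖) :
    ‖s - (a • u + (1 - a) • p)‖ ≤ ‖s - z‖ := by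
  have hmem := convex_closedBall s ‖z - s‖ (mem_closedBall_iff_norm.mpr hu)
    (mem_closedBall_iff_norm.mpr hp) ha₀ (sub_nonneg.mpr ha₁) (add_sub_cancel a 1)
  rw [norm_sub_rev, norm_sub_rev s z]
  exact mem_closedBall_iff_norm.mp hmem

lemma norm_sub_crm_relaxed_step_sq_le {X Y : Set E} {PX PY T C : E → E}
    (hPX : ∀ u, PX u ∈ X ∧ ∀ x ∈ X, ⟪u - PX u, x - PX u⟫ ≤ 0)
    (hPY : ∀ u, PY u ∈ Y ∧ ∀ x ∈ Y, ⟪u - PY u, x - PY u⟫ ≤ 0)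
    (hC : ∀ w : E, ⟪w - PX w, w - PY w⟫ ≤ 0 →
      C w ∈ supportingHalfspace w (PX w) ∩ supportingHalfspace w (PY w) ∧
      ∀ v ∈ supportingHalfspace w (PX w) ∩ supportingHalfspace w (PY w),
        ⟪w - C w, v - C w⟫ ≤ 0)
    {z s : E} (hTY : T z ∈ Y) (hTs : ‖T z - s‖ ≤ ‖z - s‖) (hs : s ∈ X ∩ Y)
    {a : ℝ} (ha : a ∈ Set.Ioo 0 1) :
    ‖s - C (a • T z + (1 - a) • PX (T z))‖ ^ 2 ≤
      ‖s - z‖ ^ 2 - max (infDist (C (a • T z + (1 - a) • PX (T z))) X)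
        (infDist (C (a • T z + (1 - a) • PX (T z))) Y) ^ 2 := by
  set u := T z
  set w := a • u + (1 - a) • PX u
  have hPXw : PX w = PX u := eq_of_forall_inner_sub_nonpos (hPX w).1 (hPX u).1 (hPX w).2
    (forall_inner_combo_sub_nonpos ha.1.le (hPX u).2)
  have hcent : ⟪w - PX w, w - PY w⟫ ≤ 0 :=
    hPXw ▸ inner_combo_sub_combo_sub_nonpos ha.1.le ha.2 ((hPY w).2 u hTY)
  obtain ⟨hc, hcmin⟩ := hC w hcent
  have hcrm := norm_sub_sq_add_max_infDist_sq_le (hPX w).1 (hPX w).2 (hPY w).1 (hPY w).2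
    hc hcmin hs
  have hPXs : ‖PX u - s‖ ≤ ‖u - s‖ := by
    rw [norm_sub_rev, norm_sub_rev u]
    exact norm_sub_le_of_inner_sub_nonpos ((hPX u).2 s hs.1)
  have hw : ‖s - w‖ ≤ ‖s - z‖ := norm_sub_combo_le ha.1.le ha.2.le hTs (hPXs.trans hTs)
  linarith [pow_le_pow_left₀ (norm_nonneg _) hw 2]

end InnerProductSpace

lemma summable_and_tsum_le_of_le_sub {a b : ℕ → ℝ} (ha : ∀ k, 0 ≤ a k) (hb : ∀ k, 0 ≤ b k)
    (hab : ∀ k, a (k + 1) ≤ a k - b k) : Summable b ∧ ∑' k, b k ≤ a 0 := by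
  have hpartial : ∀ N, ∑ i ∈ Finset.range N, b i ≤ a 0 - a N := by
    intro N
    induction N with
    | zero => simp
    | succ m ih => rw [Finset.sum_range_succ]; linarith [hab m]
  have hbound : ∀ N, ∑ i ∈ Finset.range N, b i ≤ a 0 := fun N => by linarith [hpartial N, ha N]
  exact ⟨summable_of_sum_range_le hb hbound, Real.tsum_le_of_sum_range_le hb hbound⟩

lemma tendsto_zero_of_summable_sq_succ {f : ℕ → ℝ} (hf : ∀ k, 0 ≤ f k)
    (hsum : Summable fun k => f (k + 1) ^ 2) : Tendsto f atTop (𝓝 0) := by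
  have hsq : Tendsto (fun k => f k ^ 2) atTop (𝓝 0) :=
    (tendsto_add_atTop_iff_nat 1).mp hsum.tendsto_atTop_zero
  simpa [Real.sqrt_sq (hf _)] using hsq.sqrt

theorem stmt_13_general {n : ℕ} {X Y : Set (EuclideanSpace ℝ (Fin n))}
    (hS : (X ∩ Y).Nonempty)
    (PX PY : EuclideanSpace ℝ (Fin n) → EuclideanSpace ℝ (Fin n))
    (hPX : ∀ u, PX u ∈ X ∧ ∀ x ∈ X, ⟪u - PX u, x - PX u⟫ ≤ 0)
    (hPY : ∀ u, PY u ∈ Y ∧ ∀ x ∈ Y, ⟪u - PY u, x - PY u⟫ ≤ 0)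
    (T : EuclideanSpace ℝ (Fin n) → EuclideanSpace ℝ (Fin n))
    (hTY : ∀ u, T u ∈ Y)
    (hTqne : ∀ u, ∀ s ∈ X ∩ Y, ‖T u - s‖ ≤ ‖u - s‖)
    (C : EuclideanSpace ℝ (Fin n) → EuclideanSpace ℝ (Fin n))
    (hC : ∀ w : EuclideanSpace ℝ (Fin n), ⟪w - PX w, w - PY w⟫ ≤ 0 →
      C w ∈ {v | ⟪v - PX w, w - PX w⟫ ≤ 0} ∩ {v | ⟪v - PY w, w - PY w⟫ ≤ 0} ∧
      ∀ v ∈ {v | ⟪v - PX w, w - PX w⟫ ≤ 0} ∩ {v | ⟪v - PY w, w - PY w⟫ ≤ 0},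
        ⟪w - C w, v - C w⟫ ≤ 0)
    (α : ℕ → ℝ) (hα : ∀ k, α k ∈ Set.Ioo (0:ℝ) 1)
    (z : ℕ → EuclideanSpace ℝ (Fin n))
    (hz : ∀ k, z (k+1) = C (α k • T (z k) + (1 - α k) • PX (T (z k)))) :
    (∀ s ∈ X ∩ Y, ∀ k : ℕ,
      ‖s - z (k+1)‖ ^ 2 ≤ ‖s - z k‖ ^ 2 - (max (infDist (z (k+1)) X) (infDist (z (k+1)) Y)) ^ 2) ∧
    (∑' k : ℕ, (max (infDist (z (k+1)) X) (infDist (z (k+1)) Y)) ^ 2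
        ≤ (infDist (z 0) (X ∩ Y)) ^ 2) ∧
    Tendsto (fun k => max (infDist (z k) X) (infDist (z k) Y)) atTop (𝓝 0) := by
  set δ : EuclideanSpace ℝ (Fin n) → ℝ := fun w => max (infDist w X) (infDist w Y)
  have hstep : ∀ s ∈ X ∩ Y, ∀ k, ‖s - z (k + 1)‖ ^ 2 ≤ ‖s - z k‖ ^ 2 - δ (z (k + 1)) ^ 2 :=
    fun s hs k => hz k ▸ norm_sub_crm_relaxed_step_sq_le hPX hPY hC (hTY _) (hTqne _ s hs) hs (hα k)
  have hfejer : ∀ s ∈ X ∩ Y, Summable (fun k => δ (z (k + 1)) ^ 2) ∧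
      ∑' k, δ (z (k + 1)) ^ 2 ≤ ‖s - z 0‖ ^ 2 := fun s hs =>
    summable_and_tsum_le_of_le_sub (fun k => sq_nonneg ‖s - z k‖)
      (fun k => sq_nonneg (δ (z (k + 1)))) (hstep s hs)
  obtain ⟨s₀, hs₀⟩ := hS
  have htsum : √(∑' k, δ (z (k + 1)) ^ 2) ≤ infDist (z 0) (X ∩ Y) := by
    refine (le_infDist ⟨s₀, hs₀⟩).mpr fun s hs => ?_
    rw [dist_comm, dist_eq_norm, ← Real.sqrt_sq (norm_nonneg (s - z 0))]
    exact Real.sqrt_le_sqrt (hfejer s hs).2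
  refine ⟨hstep, ?_, tendsto_zero_of_summable_sq_succ (fun k => ?_) (hfejer s₀ hs₀).1⟩
  · exact (Real.sqrt_le_left infDist_nonneg).mp htsum
  · exact le_max_of_le_left infDist_nonneg

theorem stmt_13 {n : ℕ} {X Y : Set (EuclideanSpace ℝ (Fin n))}
    (hXc : IsClosed X) (hXconv : Convex ℝ X)
    (hYc : IsClosed Y) (hYconv : Convex ℝ Y)
    (hS : (X ∩ Y).Nonempty)
    (PX PY : EuclideanSpace ℝ (Fin n) → EuclideanSpace ℝ (Fin n))
    (hPX : ∀ u, PX u ∈ X ∧ ∀ x ∈ X, ⟪u - PX u, x - PX u⟫ ≤ 0)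
    (hPY : ∀ u, PY u ∈ Y ∧ ∀ x ∈ Y, ⟪u - PY u, x - PY u⟫ ≤ 0)
    (T : EuclideanSpace ℝ (Fin n) → EuclideanSpace ℝ (Fin n))
    (hTY : ∀ u, T u ∈ Y)
    (hTqne : ∀ u, ∀ s ∈ X ∩ Y, ‖T u - s‖ ≤ ‖u - s‖)
    (C : EuclideanSpace ℝ (Fin n) → EuclideanSpace ℝ (Fin n))
    (hC : ∀ w : EuclideanSpace ℝ (Fin n), ⟪w - PX w, w - PY w⟫ ≤ 0 →
      C w ∈ {v | ⟪v - PX w, w - PX w⟫ ≤ 0} ∩ {v | ⟪v - PY w, w - PY w⟫ ≤ 0} ∧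
      ∀ v ∈ {v | ⟪v - PX w, w - PX w⟫ ≤ 0} ∩ {v | ⟪v - PY w, w - PY w⟫ ≤ 0},
        ⟪w - C w, v - C w⟫ ≤ 0)
    (α : ℕ → ℝ) (hα : ∀ k, α k ∈ Set.Ioo (0:ℝ) 1)
    (z : ℕ → EuclideanSpace ℝ (Fin n))
    (hz : ∀ k, z (k+1) = C (α k • T (z k) + (1 - α k) • PX (T (z k)))) :
    (∀ s ∈ X ∩ Y, ∀ k : ℕ,
      ‖s - z (k+1)‖ ^ 2 ≤ ‖s - z k‖ ^ 2 - (max (infDist (z (k+1)) X) (infDist (z (k+1)) Y)) ^ 2) ∧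
    (∑' k : ℕ, (max (infDist (z (k+1)) X) (infDist (z (k+1)) Y)) ^ 2
        ≤ (infDist (z 0) (X ∩ Y)) ^ 2) ∧
    Tendsto (fun k => max (infDist (z k) X) (infDist (z k) Y)) atTop (𝓝 0) :=
  stmt_13_general hS PX PY hPX hPY T hTY hTqne C hC α hα z hz
end

section
/- In the setting of the previous statement (error bound with constant ω, β := √(1−ω²), admissible T, α ∈ (0,1)), if moreover N^α(z) is centralized but not strictly centralized (hence N^α(z) ∈ Y and C^α z = P_X(Tz)), then dist(C^α z, S) ≤ (αβ / (1 − (1−α)β))·dist(Tz, S). -/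
/-!
On the segment from `p = P_X(Tz)` to `Tz`, every point still projects onto `X` at `p`, so
`P_X(N^α z) = p`. Non-strict centralization makes `N^α z - P_Y(N^α z)` orthogonal to that segment,
and since `Tz ∈ Y` this forces `N^α z ∈ Y`; the circumcentered step then returns `p`. The error
bound at a point of `Y` makes the projection onto `X` a `β`-contraction of the distance to `S`,
so `dist(p, S) ≤ β·dist(N^α z, S) ≤ β(α·dist(Tz, S) + (1 - α)·dist(p, S))` by convexity of the
distance to `S`, which rearranges to the claim.
-/

open Metric
open scoped RealInnerProductSpace

section Convex

variable {E : Type*} [SeminormedAddCommGroup E] [NormedSpace ℝ E]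

theorem Convex.convexOn_infDist {S : Set E} (hS : Convex ℝ S) :
    ConvexOn ℝ Set.univ (infDist · S) := by
  refine ⟨convex_univ, fun x _ y _ a b ha hb hab => ?_⟩
  rcases S.eq_empty_or_nonempty with rfl | hne
  · simp
  refine le_of_forall_pos_le_add fun ε hε => ?_
  obtain ⟨s, hs, hxs⟩ := (infDist_lt_iff hne).mp (lt_add_of_pos_right (infDist x S) hε)
  obtain ⟨t, ht, hyt⟩ := (infDist_lt_iff hne).mp (lt_add_of_pos_right (infDist y S) hε)
  have hcomb : a • x + b • y - (a • s + b • t) = a • (x - s) + b • (y - t) := by module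
  calc infDist (a • x + b • y) S
      ≤ dist (a • x + b • y) (a • s + b • t) := infDist_le_dist_of_mem (hS hs ht ha hb hab)
    _ ≤ a * dist x s + b * dist y t := by
        rw [dist_eq_norm, dist_eq_norm, dist_eq_norm, hcomb]
        refine (norm_add_le _ _).trans_eq ?_
        rw [norm_smul, norm_smul, Real.norm_of_nonneg ha, Real.norm_of_nonneg hb]
    _ ≤ a * (infDist x S + ε) + b * (infDist y S + ε) := by gcongr
    _ = a • infDist x S + b • infDist y S + ε := by
        simp only [smul_eq_mul]; linear_combination ε * hab

end Convex

section Projection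

variable {E : Type*} [NormedAddCommGroup E] [InnerProductSpace ℝ E]

def IsMetricProj (K : Set E) (u p : E) : Prop :=
  p ∈ K ∧ ∀ x ∈ K, ⟪u - p, x - p⟫ ≤ 0

variable {K : Set E} {u p q w : E}

theorem IsMetricProj.unique (hp : IsMetricProj K u p) (hq : IsMetricProj K u q) : p = q := by
  have hsum : ⟪u - p, q - p⟫ + ⟪u - q, p - q⟫ = ⟪q - p, q - p⟫ := by
    rw [← neg_sub q p, inner_neg_right, ← sub_eq_add_neg, ← inner_sub_left,
      sub_sub_sub_cancel_left]
  have : ⟪q - p, q - p⟫ ≤ 0 := hsum ▸ add_nonpos (hp.2 q hq.1) (hq.2 p hp.1)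
  exact (sub_eq_zero.mp (real_inner_self_nonpos.mp this)).symm

theorem IsMetricProj.smul_add_one_sub_smul {a : ℝ} (hp : IsMetricProj K w p) (ha : 0 ≤ a) :
    IsMetricProj K (a • w + (1 - a) • p) p := by
  refine ⟨hp.1, fun x hx => ?_⟩
  have : a • w + (1 - a) • p - p = a • (w - p) := by module
  rw [this, real_inner_smul_left]
  exact mul_nonpos_of_nonneg_of_nonpos ha (hp.2 x hx)

theorem IsMetricProj.eq_of_inner_le_zero (hq : IsMetricProj K u q) (hw : w ∈ K)
    (h : ⟪u - q, u - w⟫ ≤ 0) : u = q := by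
  have hsum : ⟪u - q, u - w⟫ + ⟪u - q, w - q⟫ = ⟪u - q, u - q⟫ := by
    rw [← inner_add_right, sub_add_sub_cancel]
  have : ⟪u - q, u - q⟫ ≤ 0 := hsum ▸ add_nonpos h (hq.2 w hw)
  exact sub_eq_zero.mp (real_inner_self_nonpos.mp this)

theorem IsMetricProj.norm_sub_sq_add_norm_sub_sq_le {s : E} (hp : IsMetricProj K u p)
    (hs : s ∈ K) : ‖p - s‖ ^ 2 + ‖u - p‖ ^ 2 ≤ ‖u - s‖ ^ 2 := by
  have hexp := norm_add_sq_real (u - p) (p - s)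
  rw [sub_add_sub_cancel] at hexp
  have : ⟪u - p, p - s⟫ = -⟪u - p, s - p⟫ := by rw [← inner_neg_right, neg_sub]
  nlinarith [hp.2 s hs]

theorem IsMetricProj.infDist_inter_le {X Y : Set E} {ω : ℝ} (hp : IsMetricProj X u p)
    (huY : u ∈ Y) (hS : (X ∩ Y).Nonempty) (hω : 0 ≤ ω)
    (hEB : ω * infDist u (X ∩ Y) ≤ max (infDist u X) (infDist u Y)) :
    infDist p (X ∩ Y) ≤ √(1 - ω ^ 2) * infDist u (X ∩ Y) := by
  set d := infDist u (X ∩ Y)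
  set e := infDist p (X ∩ Y)
  have hωd : ω * d ≤ ‖u - p‖ := by
    rw [infDist_zero_of_mem huY, max_eq_left infDist_nonneg] at hEB
    exact hEB.trans ((infDist_le_dist_of_mem hp.1).trans_eq (dist_eq_norm _ _))
  have hsq : e ^ 2 + (ω * d) ^ 2 ≤ d ^ 2 := by
    refine (Real.sqrt_le_left infDist_nonneg).mp ((le_infDist hS).mpr fun s hs => ?_)
    rw [Real.sqrt_le_left dist_nonneg, dist_eq_norm]
    have hes : e ≤ ‖p - s‖ := (infDist_le_dist_of_mem hs).trans_eq (dist_eq_norm _ _)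
    calc e ^ 2 + (ω * d) ^ 2 ≤ ‖p - s‖ ^ 2 + ‖u - p‖ ^ 2 := by
          gcongr
          · exact infDist_nonneg
          · exact mul_nonneg hω infDist_nonneg
      _ ≤ ‖u - s‖ ^ 2 := hp.norm_sub_sq_add_norm_sub_sq_le hs.1
  calc e = √(e ^ 2) := (Real.sqrt_sq infDist_nonneg).symm
    _ ≤ √((1 - ω ^ 2) * d ^ 2) := Real.sqrt_le_sqrt (by nlinarith)
    _ = √(1 - ω ^ 2) * d := by rw [Real.sqrt_mul' _ (sq_nonneg d), Real.sqrt_sq infDist_nonneg]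

end Projection

theorem stmt_16_general {n : ℕ} {X Y : Set (EuclideanSpace ℝ (Fin n))}
    (hXconv : Convex ℝ X)
    (hYconv : Convex ℝ Y)
    (hS : (X ∩ Y).Nonempty)
    (PX PY : EuclideanSpace ℝ (Fin n) → EuclideanSpace ℝ (Fin n))
    (hPX : ∀ u, PX u ∈ X ∧ ∀ x ∈ X, ⟪u - PX u, x - PX u⟫ ≤ 0)
    (hPY : ∀ u, PY u ∈ Y ∧ ∀ x ∈ Y, ⟪u - PY u, x - PY u⟫ ≤ 0)
    (V : Set (EuclideanSpace ℝ (Fin n))) (ω : ℝ) (hω : ω ∈ Set.Ioo (0:ℝ) 1)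
    (hEB : ∀ v ∈ V, ω * infDist v (X ∩ Y) ≤ max (infDist v X) (infDist v Y))
    (T : EuclideanSpace ℝ (Fin n) → EuclideanSpace ℝ (Fin n))
    (hTY : ∀ u, T u ∈ Y)
    (C : EuclideanSpace ℝ (Fin n) → EuclideanSpace ℝ (Fin n))
    (hC : ∀ w : EuclideanSpace ℝ (Fin n), ⟪w - PX w, w - PY w⟫ ≤ 0 →
      C w ∈ {v | ⟪v - PX w, w - PX w⟫ ≤ 0} ∩ {v | ⟪v - PY w, w - PY w⟫ ≤ 0} ∧
      ∀ v ∈ {v | ⟪v - PX w, w - PX w⟫ ≤ 0} ∩ {v | ⟪v - PY w, w - PY w⟫ ≤ 0},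
        ⟪w - C w, v - C w⟫ ≤ 0)
    (α : ℝ) (hα : α ∈ Set.Ioo (0:ℝ) 1)
    (z : EuclideanSpace ℝ (Fin n))
    (hNzV : α • T z + (1 - α) • PX (T z) ∈ V)
    -- N^α z is centralized but not strictly centralized
    (heq : ⟪(α • T z + (1 - α) • PX (T z)) - PX (α • T z + (1 - α) • PX (T z)),
            (α • T z + (1 - α) • PX (T z)) - PY (α • T z + (1 - α) • PX (T z))⟫ = 0) :
    infDist (C (α • T z + (1 - α) • PX (T z))) (X ∩ Y) ≤
      (α * Real.sqrt (1 - ω ^ 2) / (1 - (1 - α) * Real.sqrt (1 - ω ^ 2))) *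
        infDist (T z) (X ∩ Y) := by
  obtain ⟨hα0, hα1⟩ := hα
  set w := T z
  set p := PX w
  set N := α • w + (1 - α) • p with hN
  have hPXN : PX N = p :=
    IsMetricProj.unique (hPX N) (IsMetricProj.smul_add_one_sub_smul (hPX w) hα0.le)
  have hCproj := hC N heq.le
  rw [hPXN] at heq hCproj
  have hPYN : N = PY N := by
    refine IsMetricProj.eq_of_inner_le_zero (hPY N) (hTY z) (le_of_eq ?_)
    have hNw : α • (N - w) = -(1 - α) • (N - p) := by rw [hN]; module
    have : α * ⟪N - PY N, N - w⟫ = 0 := by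
      rw [← real_inner_smul_right, hNw, real_inner_smul_right, real_inner_comm, heq, mul_zero]
    exact (mul_eq_zero.mp this).resolve_left hα0.ne'
  rw [← hPYN] at hCproj
  have hCN : C N = p := by
    refine IsMetricProj.unique hCproj ⟨⟨by simp, by simp⟩, fun v hv => ?_⟩
    rw [real_inner_comm]
    exact hv.1
  have hcontr : infDist p (X ∩ Y) ≤ √(1 - ω ^ 2) * infDist N (X ∩ Y) :=
    hPXN ▸ IsMetricProj.infDist_inter_le (hPX N) (hPYN ▸ (hPY N).1) hS hω.1.le (hEB N hNzV)
  have hconv : infDist N (X ∩ Y) ≤ α * infDist w (X ∩ Y) + (1 - α) * infDist p (X ∩ Y) :=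
    (hXconv.inter hYconv).convexOn_infDist.2 (Set.mem_univ w) (Set.mem_univ p) hα0.le
      (sub_nonneg.2 hα1.le) (add_sub_cancel _ _)
  have hβ1 : √(1 - ω ^ 2) ≤ 1 := Real.sqrt_le_one.mpr (by nlinarith)
  have hden : 0 < 1 - (1 - α) * √(1 - ω ^ 2) := by nlinarith [Real.sqrt_nonneg (1 - ω ^ 2)]
  rw [hCN, div_mul_eq_mul_div, le_div_iff₀ hden]
  nlinarith [mul_le_mul_of_nonneg_left hconv (Real.sqrt_nonneg (1 - ω ^ 2))]

theorem stmt_16 {n : ℕ} {X Y : Set (EuclideanSpace ℝ (Fin n))}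
    (hXc : IsClosed X) (hXconv : Convex ℝ X)
    (hYc : IsClosed Y) (hYconv : Convex ℝ Y)
    (hS : (X ∩ Y).Nonempty)
    (PX PY : EuclideanSpace ℝ (Fin n) → EuclideanSpace ℝ (Fin n))
    (hPX : ∀ u, PX u ∈ X ∧ ∀ x ∈ X, ⟪u - PX u, x - PX u⟫ ≤ 0)
    (hPY : ∀ u, PY u ∈ Y ∧ ∀ x ∈ Y, ⟪u - PY u, x - PY u⟫ ≤ 0)
    (V : Set (EuclideanSpace ℝ (Fin n))) (ω : ℝ) (hω : ω ∈ Set.Ioo (0:ℝ) 1)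
    (hEB : ∀ v ∈ V, ω * infDist v (X ∩ Y) ≤ max (infDist v X) (infDist v Y))
    (T : EuclideanSpace ℝ (Fin n) → EuclideanSpace ℝ (Fin n))
    (hTY : ∀ u, T u ∈ Y)
    (hTqne : ∀ u, ∀ s ∈ X ∩ Y, ‖T u - s‖ ≤ ‖u - s‖)
    (C : EuclideanSpace ℝ (Fin n) → EuclideanSpace ℝ (Fin n))
    (hC : ∀ w : EuclideanSpace ℝ (Fin n), ⟪w - PX w, w - PY w⟫ ≤ 0 →
      C w ∈ {v | ⟪v - PX w, w - PX w⟫ ≤ 0} ∩ {v | ⟪v - PY w, w - PY w⟫ ≤ 0} ∧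
      ∀ v ∈ {v | ⟪v - PX w, w - PX w⟫ ≤ 0} ∩ {v | ⟪v - PY w, w - PY w⟫ ≤ 0},
        ⟪w - C w, v - C w⟫ ≤ 0)
    (α : ℝ) (hα : α ∈ Set.Ioo (0:ℝ) 1)
    (z : EuclideanSpace ℝ (Fin n)) (hzV : z ∈ V)
    (hTzV : T z ∈ V) (hNzV : α • T z + (1 - α) • PX (T z) ∈ V)
    -- N^α z is centralized but not strictly centralized
    (heq : ⟪(α • T z + (1 - α) • PX (T z)) - PX (α • T z + (1 - α) • PX (T z)),
            (α • T z + (1 - α) • PX (T z)) - PY (α • T z + (1 - α) • PX (T z))⟫ = 0) :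
    infDist (C (α • T z + (1 - α) • PX (T z))) (X ∩ Y) ≤
      (α * Real.sqrt (1 - ω ^ 2) / (1 - (1 - α) * Real.sqrt (1 - ω ^ 2))) *
        infDist (T z) (X ∩ Y) :=
  stmt_16_general hXconv hYconv hS PX PY hPX hPY V ω hω hEB T hTY C hC α hα z hNzV heq
end

section
/- Let M ⊂ R^n be a C¹ embedded manifold of dimension n−1 and z̄ ∈ M. Let (q_k) ⊂ M and (z_k) ⊂ R^n satisfy q_k → z̄, z_k → z̄, z_k ∈ T_M(q_k) (the affine tangent hyperplane to M at q_k), and z_k ≠ q_k for all k. Then dist(z_k, M)/‖z_k − q_k‖ → 0 as k → ∞. -/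
open Metric Filter Topology Asymptotics Set
open scoped RealInnerProductSpace

/-!
With `M = {g = 0}`: since `g (q k) = 0` and `z k - q k` is tangent at `q k`, the value `g (z k)`
is the error of the first-order Taylor expansion of `g` at `q k`, which is `o(‖z k - q k‖)`
because `g` is C¹. Conversely, moving from `z` along a fixed direction
`v` with `g' z̄ v = 1`, the function `g` crosses zero within distance `2 ‖v‖ |g z|`, so
`dist(z, M) = O(|g z|)` near `z̄`.
-/

theorem ContDiffAt.isLittleO_sub_sub_fderiv {𝕜 E F : Type*} [RCLike 𝕜] [NormedAddCommGroup E]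
    [NormedSpace 𝕜 E] [NormedAddCommGroup F] [NormedSpace 𝕜 F] {g : E → F} {x₀ : E}
    (hg : ContDiffAt 𝕜 1 g x₀) :
    (fun p : E × E => g p.1 - g p.2 - fderiv 𝕜 g p.2 (p.1 - p.2)) =o[𝓝 (x₀, x₀)]
      fun p => p.1 - p.2 := by
  set L := fderiv 𝕜 g x₀
  have hstrict := (hg.hasStrictFDerivAt one_ne_zero).isLittleO
  have hcorr : (fun p : E × E => (fderiv 𝕜 g p.2 - L) (p.1 - p.2)) =o[𝓝 (x₀, x₀)]
      fun p => p.1 - p.2 := by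
    refine isLittleO_iff.2 fun c hc => ?_
    have hcont : Tendsto (fun p : E × E => fderiv 𝕜 g p.2) (𝓝 (x₀, x₀)) (𝓝 L) :=
      (hg.continuousAt_fderiv one_ne_zero).tendsto.comp continuous_snd.continuousAt
    filter_upwards [hcont.eventually (closedBall_mem_nhds L hc)] with p hp
    rw [dist_eq_norm] at hp
    exact (ContinuousLinearMap.le_opNorm _ _).trans (by gcongr)
  refine (hstrict.sub hcorr).congr_left fun p => ?_
  simp only [sub_apply]
  abel

theorem exists_abs_le_and_eq_zero_of_abs_sub_sub_le {φ : ℝ → ℝ} (hφ : Continuous φ)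
    (h : ∀ t, |t| ≤ 2 * |φ 0| → |φ t - φ 0 - t| ≤ |t| / 2) :
    ∃ t, |t| ≤ 2 * |φ 0| ∧ φ t = 0 := by
  set δ := 2 * |φ 0|
  have hδ : 0 ≤ δ := by positivity
  have hδabs : |δ| = δ := abs_of_nonneg hδ
  have hright := (abs_le.1 (h δ hδabs.le)).1
  have hleft := (abs_le.1 (h (-δ) (by rw [abs_neg, hδabs]))).2
  rw [hδabs] at hright
  rw [abs_neg, hδabs] at hleft
  have hsign : (0 : ℝ) ∈ Icc (φ (-δ)) (φ δ) :=
    ⟨by linarith [le_abs_self (φ 0)], by linarith [neg_abs_le (φ 0)]⟩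
  obtain ⟨t, ht, hφt⟩ := intermediate_value_Icc (neg_le_self hδ) hφ.continuousOn hsign
  exact ⟨t, abs_le.2 ht, hφt⟩

theorem HasStrictFDerivAt.eventually_abs_sub_sub_le {E : Type*} [NormedAddCommGroup E]
    [NormedSpace ℝ E] {g : E → ℝ} {L : E →L[ℝ] ℝ} {x₀ v : E} (hg : HasStrictFDerivAt g L x₀)
    (hLv : L v = 1) :
    ∀ᶠ p : ℝ × E in 𝓝 ((0 : ℝ), x₀), |g (p.2 + p.1 • v) - g p.2 - p.1| ≤ |p.1| / 2 := by
  have hv : 0 < ‖v‖ := norm_pos_iff.2 fun h => by simp [h] at hLv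
  have hpair : Tendsto (fun p : ℝ × E => (p.2 + p.1 • v, p.2)) (𝓝 (0, x₀)) (𝓝 (x₀, x₀)) := by
    simpa using ((continuous_snd.add (continuous_fst.smul continuous_const)).prodMk
      continuous_snd).tendsto ((0 : ℝ), x₀)
  filter_upwards [hpair.eventually (hg.isLittleO.def (inv_pos.2 (by positivity : 0 < 2 * ‖v‖)))]
    with ⟨t, z⟩ h
  simp only [add_sub_cancel_left, map_smul, hLv, smul_eq_mul, mul_one, norm_smul,
    Real.norm_eq_abs] at h ⊢
  calc |g (z + t • v) - g z - t| ≤ (2 * ‖v‖)⁻¹ * (|t| * ‖v‖) := h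
    _ = |t| / 2 := by field_simp

theorem HasStrictFDerivAt.infDist_zeroSet_isBigO {E : Type*} [NormedAddCommGroup E]
    [NormedSpace ℝ E] {g : E → ℝ} {L : E →L[ℝ] ℝ} {x₀ : E} (hg : HasStrictFDerivAt g L x₀)
    (hgc : Continuous g) (hx₀ : g x₀ = 0) (hL : L ≠ 0) :
    (fun z => infDist z {x | g x = 0}) =O[𝓝 x₀] g := by
  obtain ⟨v, hLv⟩ := LinearMap.surjective (f := (L : E →ₗ[ℝ] ℝ)) (by exact_mod_cast hL) 1
  have hline := hg.eventually_abs_sub_sub_le hLv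
  rw [nhds_prod_eq] at hline
  obtain ⟨δ, hδ, P, hP, hPδ⟩ := Metric.eventually_nhds_prod_iff.1 hline
  have hgz : Tendsto (fun z => 2 * |g z|) (𝓝 x₀) (𝓝 0) := by
    simpa [hx₀] using ((hgc.tendsto x₀).abs.const_mul 2)
  refine IsBigO.of_bound (2 * ‖v‖) ?_
  filter_upwards [hP, hgz.eventually_lt_const hδ] with z hPz hgzδ
  obtain ⟨t, ht, hzero⟩ := exists_abs_le_and_eq_zero_of_abs_sub_sub_le
    (φ := fun t => g (z + t • v)) (by fun_prop) fun t ht => by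
      simp only [zero_smul, add_zero] at ht ⊢
      exact hPδ (by rw [Real.dist_0_eq_abs]; linarith) hPz
  simp only [zero_smul, add_zero] at ht
  calc ‖infDist z {x | g x = 0}‖ = infDist z {x | g x = 0} := Real.norm_of_nonneg infDist_nonneg
    _ ≤ dist z (z + t • v) := infDist_le_dist_of_mem hzero
    _ = |t| * ‖v‖ := by simp [dist_eq_norm, norm_smul]
    _ ≤ 2 * |g z| * ‖v‖ := by gcongr
    _ = 2 * ‖v‖ * ‖g z‖ := by rw [Real.norm_eq_abs]; ring

/-- A C¹ hypersurface is modelled as the zero set of a C¹ function whose derivative does not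
vanish on it; the affine tangent hyperplane at `q` is `{v | fderiv ℝ g q (v - q) = 0}`. -/
theorem stmt_18_general {n : ℕ} (g : EuclideanSpace ℝ (Fin n) → ℝ)
    (hg : ContDiff ℝ 1 g)
    (M : Set (EuclideanSpace ℝ (Fin n))) (hM : M = {x | g x = 0})
    (hgrad : ∀ x ∈ M, fderiv ℝ g x ≠ 0)
    (zbar : EuclideanSpace ℝ (Fin n)) (hzbar : zbar ∈ M)
    (q z : ℕ → EuclideanSpace ℝ (Fin n))
    (hqM : ∀ k, q k ∈ M)
    (hq : Tendsto q atTop (𝓝 zbar)) (hz : Tendsto z atTop (𝓝 zbar))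
    (htan : ∀ k, fderiv ℝ g (q k) (z k - q k) = 0) :
    Tendsto (fun k => infDist (z k) M / ‖z k - q k‖) atTop (𝓝 0) := by
  subst hM
  have htaylor : (fun k => g (z k)) =o[atTop] fun k => z k - q k :=
    (hg.contDiffAt.isLittleO_sub_sub_fderiv.comp_tendsto (hz.prodMk_nhds hq)).congr_left
      fun k => by simp only [Function.comp_apply, htan k, show g (q k) = 0 from hqM k, sub_zero]
  have hdist : (fun k => infDist (z k) {x | g x = 0}) =O[atTop] fun k => g (z k) :=
    ((hg.contDiffAt.hasStrictFDerivAt one_ne_zero).infDist_zeroSet_isBigO hg.continuous hzbar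
      (hgrad zbar hzbar)).comp_tendsto hz
  exact (hdist.trans_isLittleO htaylor).norm_right.tendsto_div_nhds_zero

/-- a C¹ embedded manifold of codimension 1 is formalized as the
zero level set of a C¹ function with nonvanishing derivative on it; the affine
tangent hyperplane at q is \`{v | fderiv ℝ g q (v - q) = 0}\`. -/
theorem stmt_18 {n : ℕ} (g : EuclideanSpace ℝ (Fin n) → ℝ)
    (hg : ContDiff ℝ 1 g)
    (M : Set (EuclideanSpace ℝ (Fin n))) (hM : M = {x | g x = 0})
    (hgrad : ∀ x ∈ M, fderiv ℝ g x ≠ 0)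
    (zbar : EuclideanSpace ℝ (Fin n)) (hzbar : zbar ∈ M)
    (q z : ℕ → EuclideanSpace ℝ (Fin n))
    (hqM : ∀ k, q k ∈ M)
    (hq : Tendsto q atTop (𝓝 zbar)) (hz : Tendsto z atTop (𝓝 zbar))
    (htan : ∀ k, fderiv ℝ g (q k) (z k - q k) = 0)
    (hne : ∀ k, z k ≠ q k) :
    Tendsto (fun k => infDist (z k) M / ‖z k - q k‖) atTop (𝓝 0) :=
  stmt_18_general g hg M hM hgrad zbar hzbar q z hqM hq hz htan
end
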